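/- arXiv:2510.15166 — 2 statements merged into one kernel-verified Lean document; each statement's English description precedes it below -/
import Mathlib

section
/- Let X and U be nonempty sets, T : X × U → X, and suppose S is a set of functions f : X × U → ℂ that separates points of R(T) × U in the second argument (i.e., S contains, for each y ∈ R(T) and u₁ ≠ u₂, a function f with f(y,u₁) ≠ f(y,u₂) unless U is a singleton). If an operator K : S → S satisfies (K f)(x,u) = f(T(x,u), u⁺) for all x ∈ X, u ∈ U, all choices of u⁺ ∈ U, and all f ∈ S, then either U is a singleton, or every f ∈ S restricted to R(T) × U is independent of its second argument. -/
/-- necessary condition for the naive input-augmented Koopman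
operator `K` on a function space `S` to be well defined: either `U` is a
singleton, or every `f ∈ S` restricted to `R(T) × U` is independent of its
second argument. The space `S` is assumed to separate points of
`R(T) × U` in the second argument unless `U` is a singleton. -/
theorem stmt_0 {X U : Type*} [Nonempty X] [Nonempty U]
    (T : X × U → X) (S : Set ((X × U) → ℂ))
    (hsep : ¬ (∀ u₁ u₂ : U, u₁ = u₂) →
      ∀ y ∈ Set.range T, ∀ u₁ u₂ : U, u₁ ≠ u₂ →
        ∃ f ∈ S, f (y, u₁) ≠ f (y, u₂))
    (K : S → S)
    (hK : ∀ (f : S) (x : X) (u uplus : U),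
      (K f : (X × U) → ℂ) (x, u) = (f : (X × U) → ℂ) (T (x, u), uplus)) :
    (∀ u₁ u₂ : U, u₁ = u₂) ∨
      (∀ f ∈ S, ∀ y ∈ Set.range T, ∀ u₁ u₂ : U, f (y, u₁) = f (y, u₂)) := by
  right
  rintro f hf y ⟨⟨x, u⟩, rfl⟩ u₁ u₂
  have h1 := hK ⟨f, hf⟩ x u u₁
  have h2 := hK ⟨f, hf⟩ x u u₂
  simp only at h1 h2
  rw [← h1, ← h2]
end

section
/- Under assumptions (i) f ∘ E ∈ F_aug for all f ∈ F_∞ and (ii) g ∘ R ∈ F_∞ for all g ∈ F_aug, the extension operator E_op : g ↦ g ∘ R maps the set of control-independent functions of F_aug onto the set of control-independent functions of F_∞, i.e., E_op(F_aug^ci) = F_∞^ci. -/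
/-- under the closure conditions, the extension operator
`g ↦ g ∘ R` maps the control-independent functions of `F_aug` onto the
control-independent functions of `F∞`. -/
theorem stmt_9 {X U : Type*}
    (R : X × (ℕ → U) → X × U) (E : X × U → X × (ℕ → U))
    (hR : ∀ (x : X) (v : ℕ → U), R (x, v) = (x, v 0))
    (hE : ∀ (x : X) (u : U), E (x, u) = (x, fun _ => u))
    (Finf : Set ((X × (ℕ → U)) → ℂ))
    (Faug : Set ((X × U) → ℂ))
    (hi : ∀ f ∈ Finf, f ∘ E ∈ Faug)
    (hii : ∀ g ∈ Faug, g ∘ R ∈ Finf) :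
    (fun g : (X × U) → ℂ => g ∘ R) ''
        {g ∈ Faug | ∀ (x : X) (u₁ u₂ : U), g (x, u₁) = g (x, u₂)} =
      {f ∈ Finf | ∀ (x : X) (v₁ v₂ : ℕ → U), f (x, v₁) = f (x, v₂)} := by
  ext f
  constructor
  · rintro ⟨g, ⟨hg, hci⟩, rfl⟩
    refine ⟨hii g hg, fun x v₁ v₂ => ?_⟩
    simp only [Function.comp, hR]
    exact hci x (v₁ 0) (v₂ 0)
  · rintro ⟨hf, hci⟩
    refine ⟨f ∘ E, ⟨hi f hf, fun x u₁ u₂ => ?_⟩, ?_⟩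
    · simp only [Function.comp, hE]
      exact hci x _ _
    · funext p
      obtain ⟨x, v⟩ := p
      simp only [Function.comp, hR, hE]
      exact hci x _ _
end
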